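/- For every n ≥ 3 with 3 | n, there exists a strong 3-central (tricentral) 2-tree G on n vertices with maximum degree Δ = 2n/3 and tail set {2,3} whose core induces K_3 and whose degree sequence is (2n/3, 2n/3, 2n/3, 2^(n−3)); in particular, every tail vertex of G has degree 2. -/

import Mathlib

open SimpleGraph

/-- `IsTwoTree G` : `G` is a 2-tree, i.e. it can be built recursively starting from the
complete graph `K₃` by repeatedly adding a new vertex adjacent exactly to the two
endpoints of an existing edge.  This is encoded via a construction ordering of the
vertices: the first three vertices form a triangle, and every later vertex has exactly
two earlier neighbors, which are adjacent. -/
def IsTwoTree {V : Type} [Fintype V] (G : SimpleGraph V) : Prop :=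
  3 ≤ Fintype.card V ∧
  ∃ e : Fin (Fintype.card V) ≃ V,
    (∀ i j : Fin (Fintype.card V), i.val < 3 → j.val < 3 → i ≠ j → G.Adj (e i) (e j)) ∧
    (∀ k : Fin (Fintype.card V), 3 ≤ k.val →
      ∃ i j : Fin (Fintype.card V), i.val < k.val ∧ j.val < k.val ∧ i ≠ j ∧
        G.Adj (e i) (e j) ∧
        ∀ m : Fin (Fintype.card V), m.val < k.val →
          (G.Adj (e k) (e m) ↔ m = i ∨ m = j))

/-- The degree of a vertex. -/
noncomputable def gdeg {V : Type} [Fintype V] (G : SimpleGraph V) (v : V) : ℕ :=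
  (G.neighborSet v).ncard

/-- `IsStrongCentral G r Δ` : `G` is a strong `r`-central 2-tree with maximum degree `Δ`
and tail set `{2,3}` :  `G` is a 2-tree, `Δ` is the maximum degree, exactly `r` vertices
have degree `Δ`, these `r` core vertices induce a complete graph, and every remaining
(tail) vertex has degree 2 or 3. -/
def IsStrongCentral {V : Type} [Fintype V] (G : SimpleGraph V) (r Δ : ℕ) : Prop :=
  IsTwoTree G ∧
  (∀ v, gdeg G v ≤ Δ) ∧
  ({v | gdeg G v = Δ}).ncard = r ∧
  (∀ u v, gdeg G u = Δ → gdeg G v = Δ → u ≠ v → G.Adj u v) ∧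
  (∀ v, gdeg G v ≠ Δ → gdeg G v = 2 ∨ gdeg G v = 3)

/-- The number `x` of tail vertices of degree 3. -/
noncomputable def tail3 {V : Type} [Fintype V] (G : SimpleGraph V) (Δ : ℕ) : ℕ :=
  ({v | gdeg G v ≠ Δ ∧ gdeg G v = 3}).ncard

/-- The number `y` of tail vertices of degree 2. -/
noncomputable def tail2 {V : Type} [Fintype V] (G : SimpleGraph V) (Δ : ℕ) : ℕ :=
  ({v | gdeg G v ≠ Δ ∧ gdeg G v = 2}).ncard

open SimpleGraph Finset

def myG (n : ℕ) : SimpleGraph (Fin n) where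
  Adj a b := a ≠ b ∧ ((a.val < 3 ∧ b.val < 3) ∨
    (a.val < 3 ∧ 3 ≤ b.val ∧ (a.val = b.val % 3 ∨ a.val = (b.val + 1) % 3)) ∨
    (b.val < 3 ∧ 3 ≤ a.val ∧ (b.val = a.val % 3 ∨ b.val = (a.val + 1) % 3)))
  symm := by
    constructor
    rintro a b ⟨h1, h2⟩
    exact ⟨fun h => h1 h.symm, by tauto⟩
  loopless := by constructor; rintro a ⟨h, -⟩; exact h rfl

instance (n : ℕ) : DecidableRel (myG n).Adj := fun a b =>
  inferInstanceAs (Decidable (_ ∧ _))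

lemma myG_adj {n : ℕ} (a b : Fin n) : (myG n).Adj a b ↔
    a.val ≠ b.val ∧ ((a.val < 3 ∧ b.val < 3) ∨
    (a.val < 3 ∧ 3 ≤ b.val ∧ (a.val = b.val % 3 ∨ a.val = (b.val + 1) % 3)) ∨
    (b.val < 3 ∧ 3 ≤ a.val ∧ (b.val = a.val % 3 ∨ b.val = (a.val + 1) % 3))) := by
  simp [myG, Fin.ext_iff, not_iff_not]

lemma gdeg_eq {V : Type} [Fintype V] [DecidableEq V] (G : SimpleGraph V)
    [DecidableRel G.Adj] (v : V) : gdeg G v = G.degree v := by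
  rw [gdeg, Set.ncard_eq_toFinset_card', SimpleGraph.degree, SimpleGraph.neighborFinset]

lemma card_mod (n r : ℕ) (h3 : 3 ∣ n) (hr : r < 3) :
    (Finset.univ.filter (fun a : Fin n => a.val % 3 = r)).card = n / 3 := by
  obtain ⟨m, rfl⟩ := h3
  rw [Nat.mul_div_cancel_left _ (by norm_num)]
  refine (Finset.card_bij' (t := Finset.range m) (fun a _ => a.val / 3)
    (fun b hb => ⟨3 * b + r, by simp only [Finset.mem_range] at hb; omega⟩)
    ?_ ?_ ?_ ?_).trans (Finset.card_range m)
  · intro a ha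
    simp only [Finset.mem_filter, Finset.mem_univ, true_and] at ha
    have := a.isLt
    simp only [Finset.mem_range]
    omega
  · intro b hb
    simp only [Finset.mem_range] at hb
    simp only [Finset.mem_filter, Finset.mem_univ, true_and]
    omega
  · intro a ha
    simp only [Finset.mem_filter, Finset.mem_univ, true_and] at ha
    apply Fin.ext
    simp only
    omega
  · intro b hb
    simp only [Finset.mem_range] at hb
    dsimp only
    omega

lemma deg_tail (n : ℕ) (hn : 3 ≤ n) (k : Fin n) (hk : 3 ≤ k.val) :
    (myG n).degree k = 2 := by
  have h1 : k.val % 3 < n := by omega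
  have h2 : (k.val + 1) % 3 < n := by omega
  have : (myG n).neighborFinset k = {⟨k.val % 3, h1⟩, ⟨(k.val + 1) % 3, h2⟩} := by
    ext a
    simp only [SimpleGraph.mem_neighborFinset, myG_adj, Finset.mem_insert,
      Finset.mem_singleton, Fin.ext_iff]
    omega
  rw [SimpleGraph.degree, this]
  rw [Finset.card_insert_of_notMem (by simp only [Finset.mem_singleton, Fin.ext_iff]; omega),
    Finset.card_singleton]

lemma deg_core (n : ℕ) (hn : 3 ≤ n) (hdvd : 3 ∣ n) (c : Fin n) (hc : c.val < 3) :
    (myG n).degree c = 2 * n / 3 := by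
  classical
  have key := Finset.card_filter_add_card_filter_not
    (s := (Finset.univ : Finset (Fin n))) (p := fun a => (myG n).Adj c a)
  rw [Finset.card_univ, Fintype.card_fin] at key
  have hdeg : (myG n).degree c = (Finset.univ.filter (fun a => (myG n).Adj c a)).card := by
    rw [SimpleGraph.degree]; congr 1; ext a; simp [SimpleGraph.mem_neighborFinset]
  have hr : (c.val + 1) % 3 < 3 := by omega
  have hne : (Finset.univ.filter (fun a : Fin n => ¬ (myG n).Adj c a)) =
      insert c ((Finset.univ.filter (fun a : Fin n => a.val % 3 = (c.val + 1) % 3)).erase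
        ⟨(c.val + 1) % 3, by omega⟩) := by
    ext a
    simp only [Finset.mem_filter, Finset.mem_univ, true_and, Finset.mem_insert,
      Finset.mem_erase, myG_adj, Fin.ext_iff, ne_eq]
    omega
  have hcard : (Finset.univ.filter (fun a : Fin n => ¬ (myG n).Adj c a)).card = n / 3 := by
    rw [hne, Finset.card_insert_of_notMem (by
        simp only [Finset.mem_erase, Finset.mem_filter, Finset.mem_univ, true_and,
          Fin.ext_iff, ne_eq]
        omega),
      Finset.card_erase_of_mem (by
        simp only [Finset.mem_filter, Finset.mem_univ, true_and]
        omega),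
      card_mod n _ hdvd hr]
    obtain ⟨m, rfl⟩ := hdvd
    have : 1 ≤ m := by omega
    omega
  rw [hdeg]
  rw [hcard] at key
  obtain ⟨m, rfl⟩ := hdvd
  omega

lemma myG_twoTree (n : ℕ) (hn : 3 ≤ n) : IsTwoTree (myG n) := by
  constructor
  · simpa using hn
  · refine ⟨finCongr (Fintype.card_fin n), ?_, ?_⟩
    · intro i j hi hj hij
      rw [myG_adj]
      simp only [finCongr_apply, Fin.coe_cast]
      exact ⟨Fin.val_ne_of_ne hij, Or.inl ⟨hi, hj⟩⟩
    · intro k hk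
      have hkc := k.isLt
      refine ⟨⟨k.val % 3, by omega⟩, ⟨(k.val + 1) % 3, by omega⟩,
        by simp only; omega, by simp only; omega,
        by simp only [ne_eq, Fin.ext_iff]; omega,
        by rw [myG_adj]; simp only [finCongr_apply, Fin.coe_cast]; omega, ?_⟩
      intro m hm
      rw [myG_adj]
      simp only [finCongr_apply, Fin.coe_cast, Fin.ext_iff]
      omega

theorem stmt18 (n : ℕ) (hn : 3 ≤ n) (hdvd : 3 ∣ n) :
    ∃ G : SimpleGraph (Fin n),
      IsStrongCentral G 3 (2 * n / 3) ∧
      (∀ v, gdeg G v ≠ 2 * n / 3 → gdeg G v = 2) := by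
  classical
  have hcore : ∀ v : Fin n, v.val < 3 → gdeg (myG n) v = 2 * n / 3 := fun v hv => by
    rw [gdeg_eq]; exact deg_core n hn hdvd v hv
  have htail : ∀ v : Fin n, 3 ≤ v.val → gdeg (myG n) v = 2 := fun v hv => by
    rw [gdeg_eq]; exact deg_tail n hn v hv
  have hΔ2 : 2 ≤ 2 * n / 3 := by omega
  have hbig : ∀ v : Fin n, 3 ≤ v.val → 2 * n / 3 ≠ 2 := by
    intro v hv
    have := v.isLt
    omega
  have hlt3 : ∀ v : Fin n, gdeg (myG n) v = 2 * n / 3 → v.val < 3 := by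
    intro v h
    by_contra hge
    push_neg at hge
    exact hbig v hge (h ▸ htail v hge)
  refine ⟨myG n, ⟨myG_twoTree n hn, ?_, ?_, ?_, ?_⟩, ?_⟩
  · intro v
    rcases lt_or_ge v.val 3 with h | h
    · rw [hcore v h]
    · rw [htail v h]; exact hΔ2
  · have hset : {v : Fin n | gdeg (myG n) v = 2 * n / 3} =
        ↑(Finset.univ.filter (fun v : Fin n => v.val < 3)) := by
      ext v
      simp only [Set.mem_setOf_eq, Finset.coe_filter, Finset.mem_univ, true_and]
      exact ⟨hlt3 v, hcore v⟩
    rw [hset, Set.ncard_coe_finset]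
    have h0 : (0 : ℕ) < n := by omega
    have h1 : (1 : ℕ) < n := by omega
    have h2 : (2 : ℕ) < n := by omega
    have : Finset.univ.filter (fun v : Fin n => v.val < 3) =
        {⟨0, h0⟩, ⟨1, h1⟩, ⟨2, h2⟩} := by
      ext v
      simp only [Finset.mem_filter, Finset.mem_univ, true_and, Finset.mem_insert,
        Finset.mem_singleton, Fin.ext_iff]
      omega
    rw [this, Finset.card_insert_of_notMem (by
        simp only [Finset.mem_insert, Finset.mem_singleton, Fin.ext_iff]; omega),
      Finset.card_insert_of_notMem (by
        simp only [Finset.mem_singleton, Fin.ext_iff]; omega),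
      Finset.card_singleton]
  · intro u v hu hv huv
    rw [myG_adj]
    exact ⟨Fin.val_ne_of_ne huv, Or.inl ⟨hlt3 u hu, hlt3 v hv⟩⟩
  · intro v hv
    rcases lt_or_ge v.val 3 with h | h
    · exact absurd (hcore v h) hv
    · exact Or.inl (htail v h)
  · intro v hv
    rcases lt_or_ge v.val 3 with h | h
    · exact absurd (hcore v h) hv
    · exact htail v h
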